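/- arXiv:1611.02021 — 4 statements merged into one kernel-verified Lean document; each statement's English description precedes it below -/
import Mathlib

section
/- Let X be a nonempty subset of {0,1}^k and let n ≥ k. Then there exists a weight function w assigning a nonnegative integer to each isometric copy of X in {0,1}^n such that every element of {0,1}^n has total multiplicity (sum of weights of the copies containing it) exactly equal to |X|. -/
/-!
Embed `{0,1}^k` into `{0,1}^n` isometrically by zero-padding, and give each copy `A` of `X` the
weight "number of translation vectors `t` with `t + pad X = A`". The total weight at a point `x`
then counts the `t` with `x ∈ t + pad X`, i.e. the `t ∈ x - pad X`, of which there are `|X|`.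
-/

open Finset Function

theorem hammingDist_extend {ι κ β : Type*} [Fintype ι] [Fintype κ] [DecidableEq β]
    {e : ι → κ} (he : Injective e) (x y : ι → β) (z : κ → β) :
    hammingDist (extend e x z) (extend e y z) = hammingDist x y := by
  have hfilter : ({j | extend e x z j ≠ extend e y z j} : Finset κ) =
      ({i | x i ≠ y i} : Finset ι).map ⟨e, he⟩ := by
    ext j
    by_cases hj : ∃ i, e i = j
    · obtain ⟨i, rfl⟩ := hj
      simp [he.extend_apply]
    · simp [not_exists.mp hj]
  simp only [hammingDist, hfilter, card_map]

theorem hammingDist_add_left {ι : Type*} {β : ι → Type*} [Fintype ι] [∀ i, AddGroup (β i)]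
    [∀ i, DecidableEq (β i)] (t x y : ∀ i, β i) :
    hammingDist (t + x) (t + y) = hammingDist x y :=
  hammingDist_comp _ fun i => add_right_injective (t i)

theorem Finset.card_filter_mem_image_add_left {α G : Type*} [AddGroup G] [Fintype G]
    [DecidableEq G] {φ : α → G} (hφ : Injective φ) (S : Finset α) (x : G) :
    #{t | x ∈ S.image (fun a => t + φ a)} = #S := by
  have htranslates : ({t | x ∈ S.image (fun a => t + φ a)} : Finset G) =
      S.image (fun a => x - φ a) := by
    ext t
    simp only [mem_filter, mem_univ, true_and, mem_image, sub_eq_iff_eq_add]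
    exact exists_congr fun a => and_congr_right' eq_comm
  exact htranslates ▸ card_image_of_injective _ (sub_right_injective.comp hφ)

theorem stmt_2_general (k n : ℕ) (hkn : k ≤ n) (X : Finset (Fin k → ZMod 2)) :
    ∃ w : Finset (Fin n → ZMod 2) → ℕ,
      (∀ A, w A ≠ 0 → ∃ φ : (Fin k → ZMod 2) → (Fin n → ZMod 2),
        (∀ a b, hammingDist (φ a) (φ b) = hammingDist a b) ∧ X.image φ = A) ∧
      (∀ x : Fin n → ZMod 2,
        ∑ A ∈ Finset.univ.filter (fun A : Finset (Fin n → ZMod 2) => x ∈ A), w A = X.card) := by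
  set pad : (Fin k → ZMod 2) → (Fin n → ZMod 2) := fun a => extend (Fin.castLE hkn) a 0
  have pad_isometry (a b) : hammingDist (pad a) (pad b) = hammingDist a b :=
    hammingDist_extend (Fin.castLE_injective hkn) a b 0
  have pad_injective : Injective pad := fun a b hab =>
    hammingDist_eq_zero.mp (by rw [← pad_isometry, hab, hammingDist_self])
  set copy : (Fin n → ZMod 2) → Finset (Fin n → ZMod 2) := fun t => X.image (t + pad ·)
  refine ⟨fun A => #{t | copy t = A}, fun A hA => ?_, fun x => ?_⟩
  · obtain ⟨t, ht⟩ := card_ne_zero.mp hA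
    exact ⟨(t + pad ·), fun a b => (hammingDist_add_left _ _ _).trans (pad_isometry a b),
      (mem_filter.mp ht).2⟩
  · rw [sum_card_fiberwise_eq_card_filter, ← card_filter_mem_image_add_left pad_injective X x]
    simp only [mem_filter, mem_univ, true_and, copy]

theorem stmt_2 (k n : ℕ) (hkn : k ≤ n) (X : Finset (Fin k → ZMod 2)) (hX : X.Nonempty) :
    ∃ w : Finset (Fin n → ZMod 2) → ℕ,
      (∀ A, w A ≠ 0 → ∃ φ : (Fin k → ZMod 2) → (Fin n → ZMod 2),
        (∀ a b, hammingDist (φ a) (φ b) = hammingDist a b) ∧ X.image φ = A) ∧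
      (∀ x : Fin n → ZMod 2,
        ∑ A ∈ Finset.univ.filter (fun A : Finset (Fin n → ZMod 2) => x ∈ A), w A = X.card) :=
  stmt_2_general k n hkn X
end

section
/- Let X be a nonempty subset of {0,1}^k and let r be a power of 2. Then there exists an integer n ≥ k such that there is a weight function assigning nonnegative integers to the isometric copies of X in {0,1}^n under which every element of {0,1}^n has multiplicity congruent to 1 modulo r. -/
/-!
Call an integer-valued function on `(ZMod 2)^n` realisable if it is an integer combination of
indicators of isometric copies of `X` (i.e. lies in `copySpan X n`). Over `ZMod 2` the constant
`1` is a convolution `g * 1_X`: induct on `k`, splitting `X` by its first coordinate into slices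
`X₀, X₁`; if `X₀ = X₁` take `g y = y₀ · h (tail y)` with `h` for `X₀`, otherwise take
`g y = h (tail y)` with `h` for `X₀ ∆ X₁`.
Lifting `g` to `ℤ` gives a realisable `κ ≡ 1 [ZMOD 2]` on `(ZMod 2)^k`.

Copies of `X` inside one block of `(ZMod 2)^(n+k)` with the other block fixed are again copies,
so if `μ ≡ 1 [ZMOD 2^d]` is realisable on `(ZMod 2)^n`, then `(x, y) ↦ μ x - (μ x - 1) κ y` is
realisable on `(ZMod 2)^(n+k)`, and it is `≡ 1 [ZMOD 2^(d+1)]`. Reducing the integer weights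
mod `2^d` gives the natural weights.
-/

open Finset
open scoped symmDiff

namespace HammingCube

theorem sum_symmDiff {R ι : Type*} [CommRing R] [CharP R 2] [DecidableEq ι] (s t : Finset ι)
    (f : ι → R) : ∑ i ∈ s ∆ t, f i = ∑ i ∈ s, f i + ∑ i ∈ t, f i := by
  have hΔ : ∑ i ∈ s ∆ t, f i + ∑ i ∈ s ∩ t, f i = ∑ i ∈ s ∪ t, f i := by
    rw [symmDiff_eq_sup_sdiff_inf]
    exact sum_sdiff inter_subset_union
  linear_combination hΔ + sum_union_inter (s₁ := s) (s₂ := t) (f := f)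
    - (∑ i ∈ s ∩ t, f i) * CharTwo.two_eq_zero (R := R)

section HeadSlice

variable {β : Type*} {k : ℕ}

noncomputable def headSlice (X : Finset (Fin (k + 1) → β)) (b : β) : Finset (Fin k → β) :=
  X.preimage (Fin.cons (α := fun _ => β) b) (Fin.cons_right_injective _).injOn

@[simp]
theorem mem_headSlice {X : Finset (Fin (k + 1) → β)} {b : β} {a : Fin k → β} :
    a ∈ headSlice X b ↔ Fin.cons b a ∈ X :=
  mem_preimage

theorem sum_eq_sum_headSlice [Fintype β] [DecidableEq β] {M : Type*} [AddCommMonoid M]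
    (X : Finset (Fin (k + 1) → β)) (F : (Fin (k + 1) → β) → M) :
    ∑ a ∈ X, F a = ∑ b, ∑ a ∈ headSlice X b, F (Fin.cons b a) := by
  rw [← sum_fiberwise X (· 0)]
  refine sum_congr rfl fun b _ => sum_nbij' Fin.tail (Fin.cons (α := fun _ => β) b) ?_ ?_ ?_ ?_ ?_
  all_goals intro a ha
  all_goals simp only [mem_filter, mem_headSlice] at ha
  · simpa [← ha.2] using ha.1
  · simpa using ha
  · simp [← ha.2]
  · simp
  · simp [← ha.2]

end HeadSlice

theorem exists_sum_sub_eq_one : ∀ {k : ℕ} (X : Finset (Fin k → ZMod 2)), X.Nonempty →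
    ∃ g : (Fin k → ZMod 2) → ZMod 2, ∀ x, ∑ a ∈ X, g (x - a) = 1
  | 0, X, hX => ⟨fun _ => 1, fun x => by simp [hX.eq_univ]⟩
  | k + 1, X, hX => by
    have hsplit (φ : ZMod 2 → ZMod 2) (h : (Fin k → ZMod 2) → ZMod 2) (x : Fin (k + 1) → ZMod 2) :
        ∑ a ∈ X, φ ((x - a) 0) * h (Fin.tail (x - a))
          = φ (x 0) * ∑ a ∈ headSlice X 0, h (Fin.tail x - a)
            + φ (x 0 - 1) * ∑ a ∈ headSlice X 1, h (Fin.tail x - a) := by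
      rw [sum_eq_sum_headSlice, show (univ : Finset (ZMod 2)) = {0, 1} from rfl,
        sum_pair zero_ne_one]
      have htail (b : ZMod 2) (a : Fin k → ZMod 2) :
          Fin.tail (x - Fin.cons b a) = Fin.tail x - a := by
        ext i
        simp [Fin.tail]
      simp [mul_sum, htail]
    by_cases heq : headSlice X 0 = headSlice X 1
    · have hne : (headSlice X 0).Nonempty := by
        obtain ⟨a, ha⟩ := hX
        have hb : ∀ b : ZMod 2, b = 0 ∨ b = 1 := by decide
        obtain h | h := hb (a 0)
        · exact ⟨Fin.tail a, by simpa [← h] using ha⟩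
        · exact ⟨Fin.tail a, by simpa [heq, ← h] using ha⟩
      obtain ⟨h, hh⟩ := exists_sum_sub_eq_one (headSlice X 0) hne
      refine ⟨fun y => y 0 * h (Fin.tail y), fun x => ?_⟩
      change ∑ a ∈ X, id ((x - a) 0) * h (Fin.tail (x - a)) = 1
      rw [hsplit id h x, ← heq, hh, mul_one, mul_one]
      generalize x 0 = t
      revert t
      decide
    · obtain ⟨h, hh⟩ := exists_sum_sub_eq_one _ (symmDiff_nonempty.2 heq)
      refine ⟨fun y => h (Fin.tail y), fun x => ?_⟩
      simpa [← sum_symmDiff, hh] using hsplit 1 h x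

section Copies

variable {β : Type*} [DecidableEq β] {k n m p : ℕ}

def IsIsometricCopy (X : Finset (Fin k → β)) (A : Finset (Fin n → β)) : Prop :=
  ∃ φ : (Fin k → β) → (Fin n → β),
    (∀ a b, hammingDist (φ a) (φ b) = hammingDist a b) ∧ X.image φ = A

theorem IsIsometricCopy.image {X : Finset (Fin k → β)} {A : Finset (Fin n → β)}
    (hA : IsIsometricCopy X A) {ψ : (Fin n → β) → (Fin p → β)}
    (hψ : ∀ a b, hammingDist (ψ a) (ψ b) = hammingDist a b) :
    IsIsometricCopy X (A.image ψ) := by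
  obtain ⟨φ, hφ, rfl⟩ := hA
  exact ⟨ψ ∘ φ, fun a b => (hψ _ _).trans (hφ a b), by rw [image_image]⟩

theorem isIsometricCopy_image_add [AddGroup β] (X : Finset (Fin k → β)) (c : Fin k → β) :
    IsIsometricCopy X (X.image (c + ·)) :=
  ⟨(c + ·), fun _ _ => hammingDist_comp (fun i => (c i + ·)) fun i => add_right_injective (c i),
    rfl⟩

theorem hammingDist_append (a b : Fin n → β) (y z : Fin m → β) :
    hammingDist (Fin.append a y) (Fin.append b z) = hammingDist a b + hammingDist y z := by
  simp only [hammingDist, card_filter, Fin.sum_univ_add, Fin.append_left, Fin.append_right]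

def copySpan (X : Finset (Fin k → β)) (n : ℕ) : Submodule ℤ ((Fin n → β) → ℤ) :=
  Submodule.span ℤ ((fun A : Finset (Fin n → β) => Set.indicator (A : Set (Fin n → β)) 1) ''
    {A | IsIsometricCopy X A})

variable {X : Finset (Fin k → β)}

theorem indicator_mem_copySpan {A : Finset (Fin n → β)} (hA : IsIsometricCopy X A) :
    Set.indicator (A : Set (Fin n → β)) 1 ∈ copySpan X n :=
  Submodule.subset_span ⟨A, hA, rfl⟩

theorem sum_sub_mem_copySpan [AddCommGroup β] [Fintype β] (g : (Fin k → β) → ℤ) :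
    (fun x => ∑ a ∈ X, g (x - a)) ∈ copySpan X k := by
  have h : (fun x => ∑ a ∈ X, g (x - a)) = ∑ c, g c • Set.indicator ↑(X.image (c + ·)) 1 := by
    ext x
    have hmem (a) : x ∈ X.image (x - a + ·) ↔ a ∈ X := by simp
    rw [Finset.sum_apply, ← Equiv.sum_comp (Equiv.subLeft x)]
    simp only [Equiv.subLeft_apply, Pi.smul_apply, Set.indicator_apply, mem_coe, hmem]
    simp [sum_ite_mem]
  rw [h]
  exact Submodule.sum_mem _ fun c _ =>
    Submodule.smul_mem _ _ (indicator_mem_copySpan (isIsometricCopy_image_add X c))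

theorem mul_comp_mem_copySpan [Fintype β] {μ : (Fin n → β) → ℤ} (hμ : μ ∈ copySpan X n)
    (e : (Fin p → β) ≃ (Fin n → β) × (Fin m → β))
    (he : ∀ y a b, hammingDist (e.symm (a, y)) (e.symm (b, y)) = hammingDist a b)
    (ν : (Fin m → β) → ℤ) : (fun x => μ (e x).1 * ν (e x).2) ∈ copySpan X p := by
  let L : ((Fin n → β) → ℤ) →ₗ[ℤ] (Fin p → β) → ℤ :=
    LinearMap.mulRight ℤ (fun x => ν (e x).2) ∘ₗ LinearMap.funLeft ℤ ℤ (fun x => (e x).1)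
  suffices copySpan X n ≤ (copySpan X p).comap L from this hμ
  refine Submodule.span_le.mpr ?_
  rintro _ ⟨A, hA, rfl⟩
  have hL : L (Set.indicator ↑A 1)
      = ∑ y, ν y • Set.indicator ↑(A.image fun a => e.symm (a, y)) 1 := by
    ext x
    have hmem (y) : x ∈ A.image (fun a => e.symm (a, y)) ↔ (e x).1 ∈ A ∧ (e x).2 = y := by
      simp [Equiv.eq_symm_apply, Prod.ext_iff, eq_comm]
    simp only [L, LinearMap.comp_apply, LinearMap.mulRight_apply, LinearMap.funLeft_apply,
      Pi.mul_apply, Finset.sum_apply, Pi.smul_apply, Set.indicator_apply, mem_coe, hmem]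
    by_cases h : (e x).1 ∈ A <;> simp [h]
  change L _ ∈ copySpan X p
  rw [hL]
  exact Submodule.sum_mem _ fun y _ =>
    Submodule.smul_mem _ _ (indicator_mem_copySpan (hA.image (he y)))

theorem mul_append_mem_copySpan_left [Fintype β] {μ : (Fin n → β) → ℤ} (hμ : μ ∈ copySpan X n)
    (ν : (Fin m → β) → ℤ) :
    (fun x : Fin (n + m) → β => μ (fun i => x (Fin.castAdd m i)) * ν (fun j => x (Fin.natAdd n j)))
      ∈ copySpan X (n + m) :=
  mul_comp_mem_copySpan hμ (Fin.appendEquiv n m).symm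
    (fun y a b => (hammingDist_append a b y y).trans (by simp)) ν

theorem mul_append_mem_copySpan_right [Fintype β] {ν : (Fin m → β) → ℤ} (hν : ν ∈ copySpan X m)
    (μ : (Fin n → β) → ℤ) :
    (fun x : Fin (n + m) → β => μ (fun i => x (Fin.castAdd m i)) * ν (fun j => x (Fin.natAdd n j)))
      ∈ copySpan X (n + m) := by
  convert mul_comp_mem_copySpan hν ((Fin.appendEquiv n m).symm.trans (Equiv.prodComm _ _))
    (fun y a b => (hammingDist_append y y a b).trans (by simp)) μ using 2
  exact mul_comm _ _

theorem exists_weights_of_mem_copySpan [Fintype β] {μ : (Fin n → β) → ℤ} (hμ : μ ∈ copySpan X n) :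
    ∃ c : Finset (Fin n → β) → ℤ, (∀ A, c A ≠ 0 → IsIsometricCopy X A) ∧
      ∀ x, μ x = ∑ A ∈ univ.filter (fun A => x ∈ A), c A := by
  obtain ⟨l, hl, rfl⟩ := (Finsupp.mem_span_image_iff_linearCombination ℤ).1 hμ
  refine ⟨l, fun A hA => hl (Finsupp.mem_support_iff.2 hA), fun x => ?_⟩
  rw [Finsupp.linearCombination_apply, Finsupp.sum_fintype _ _ (by simp)]
  simp [Set.indicator_apply, sum_filter]

end Copies

theorem sub_sub_one_mul_modEq_one {a b m n : ℤ} (ha : a ≡ 1 [ZMOD m]) (hb : b ≡ 1 [ZMOD n]) :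
    a - (a - 1) * b ≡ 1 [ZMOD m * n] :=
  Int.modEq_iff_dvd.2 <|
    (mul_dvd_mul (Int.modEq_iff_dvd.1 ha) (Int.modEq_iff_dvd.1 hb)).trans (dvd_of_eq (by ring))

section Binary

variable {k : ℕ} {X : Finset (Fin k → ZMod 2)}

theorem exists_mem_copySpan_modEq_two (hX : X.Nonempty) :
    ∃ κ ∈ copySpan X k, ∀ x, κ x ≡ 1 [ZMOD 2] := by
  obtain ⟨g, hg⟩ := exists_sum_sub_eq_one X hX
  exact ⟨_, sum_sub_mem_copySpan fun a => ((g a).val : ℤ),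
    fun x => (ZMod.intCast_eq_intCast_iff _ _ 2).1 (by simpa using hg x)⟩

theorem exists_mem_copySpan_modEq_pow_two (hX : X.Nonempty) (d : ℕ) :
    ∃ n, k ≤ n ∧ ∃ μ ∈ copySpan X n, ∀ x, μ x ≡ 1 [ZMOD 2 ^ d] := by
  induction d with
  | zero => exact ⟨k, le_rfl, 0, zero_mem _, fun _ => by simp [Int.modEq_one]⟩
  | succ d ih =>
    obtain ⟨n, hkn, μ, hμ, hμ1⟩ := ih
    obtain ⟨κ, hκ, hκ1⟩ := exists_mem_copySpan_modEq_two hX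
    refine ⟨n + k, by omega, _, sub_mem (mul_append_mem_copySpan_left hμ 1)
      (mul_append_mem_copySpan_right hκ (μ - 1)), fun x => ?_⟩
    simpa [pow_succ] using sub_sub_one_mul_modEq_one (hμ1 _) (hκ1 _)

end Binary

end HammingCube

theorem stmt_3 (k : ℕ) (X : Finset (Fin k → ZMod 2)) (hX : X.Nonempty)
    (r d : ℕ) (hr : r = 2 ^ d) :
    ∃ n : ℕ, k ≤ n ∧
      ∃ w : Finset (Fin n → ZMod 2) → ℕ,
        (∀ A, w A ≠ 0 → ∃ φ : (Fin k → ZMod 2) → (Fin n → ZMod 2),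
          (∀ a b, hammingDist (φ a) (φ b) = hammingDist a b) ∧ X.image φ = A) ∧
        (∀ x : Fin n → ZMod 2,
          (∑ A ∈ Finset.univ.filter (fun A : Finset (Fin n → ZMod 2) => x ∈ A), w A) ≡ 1 [MOD r]) := by
  obtain ⟨n, hkn, μ, hμ, hμ1⟩ := HammingCube.exists_mem_copySpan_modEq_pow_two hX d
  obtain ⟨c, hc, hcμ⟩ := HammingCube.exists_weights_of_mem_copySpan hμ
  subst hr
  refine ⟨n, hkn, fun A => (c A : ZMod (2 ^ d)).val, fun A hA => hc A ?_, fun x => ?_⟩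
  · rintro hc0
    simp [hc0] at hA
  · rw [← ZMod.natCast_eq_natCast_iff]
    push_cast [ZMod.natCast_zmod_val]
    rw [← Int.cast_sum, ← hcμ]
    exact_mod_cast (ZMod.intCast_eq_intCast_iff _ _ _).2 (hμ1 x)
end

section
/- For every odd ℓ ≥ 3 there exists a graph H that is isomorphic to an induced subgraph of some power P_ℓ^m of the path on ℓ vertices, has |V(H)| = ℓ^2 (a power of ℓ), but such that for every n the vertex set of P_ℓ^n cannot be partitioned into sets inducing copies of H. -/
/-- The `n`-th Cartesian power of the path on `ℓ` vertices: vertices are tuples in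
`{0,...,ℓ-1}^n`, adjacent iff their ℓ1-distance is 1. -/
def pathPower (ℓ n : ℕ) : SimpleGraph (Fin n → Fin ℓ) where
  Adj x y := ∑ i, (((x i).val : ℤ) - ((y i).val : ℤ)).natAbs = 1
  symm := by
    refine ⟨?_⟩
    intro x y h
    beta_reduce at h ⊢
    rw [← h]
    exact Finset.sum_congr rfl fun i _ => by omega
  loopless := by refine ⟨?_⟩; intro x h; beta_reduce at h; simp at h


/-!
Give each vertex `x` of `P_ℓ^n` the sign `(-1)^(x₀ + ⋯ + xₙ₋₁)`. Adjacent vertices have opposite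
signs, so on a connected graph two such signings differ by a global sign: the total sign of every
induced copy of a connected graph `H` is `±σ(H)`. For odd `ℓ` the total sign of `P_ℓ^n` is
`(1 - 1 + ⋯ + 1)^n = 1`, so a partition of `P_ℓ^n` into copies of `H` forces `σ(H) ∣ 1`.
Any connected `H` with `σ(H) ≠ ±1` therefore works; the simplest is the star formed by the origin
and the `ℓ² - 1` unit vectors of `P_ℓ^(ℓ²-1)`, with `ℓ²` vertices and `σ = 2 - ℓ²`.
-/

open Finset

theorem SimpleGraph.Reachable.eq_of_forall_adj_eq {V α : Type*} {G : SimpleGraph V} {f : V → α}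
    (hf : ∀ ⦃u v⦄, G.Adj u v → f u = f v) {u v : V} (h : G.Reachable u v) : f u = f v := by
  obtain ⟨p⟩ := h
  induction p with
  | nil => rfl
  | cons hadj _ ih => exact (hf hadj).trans ih

theorem SimpleGraph.Iso.associated_sum_of_adj_neg {V W R : Type*} [Fintype V] [Fintype W]
    [CommRing R] {G : SimpleGraph V} {H : SimpleGraph W} (φ : G ≃g H) (hG : G.Connected)
    {f : V → Rˣ} {g : W → Rˣ} (hf : ∀ ⦃u v⦄, G.Adj u v → f v = -f u)
    (hg : ∀ ⦃u v⦄, H.Adj u v → g v = -g u) :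
    Associated (∑ v, (f v : R)) (∑ w, (g w : R)) := by
  obtain ⟨v₀⟩ := hG.nonempty
  set c := (f v₀)⁻¹ * g (φ v₀)
  have hratio (v : V) : (f v)⁻¹ * g (φ v) = c :=
    (hG.preconnected v v₀).eq_of_forall_adj_eq (f := fun v => (f v)⁻¹ * g (φ v))
      fun u w huw => by rw [hf huw, hg (φ.map_adj_iff.2 huw), inv_neg, neg_mul_neg]
  refine ⟨c, ?_⟩
  calc (∑ v, (f v : R)) * c = ∑ v, (g (φ v) : R) := by
        rw [sum_mul]
        exact sum_congr rfl fun v _ => by rw [← hratio v]; simp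
    _ = ∑ w, (g w : R) := φ.toEquiv.sum_comp fun w => (g w : R)

open Classical in
theorem dvd_sum_of_dvd_sum_parts {α R : Type*} [Fintype α] [NonUnitalSemiring R]
    {P : Set (Set α)} (hP : ∀ x, ∃! A, A ∈ P ∧ x ∈ A) {f : α → R} {d : R}
    (hd : ∀ A ∈ P, d ∣ ∑ x : A, f x) : d ∣ ∑ x, f x := by
  choose part hpart hunique using hP
  rw [← sum_fiberwise_of_maps_to (t := univ.image part)
    fun x _ => mem_image_of_mem part (mem_univ x)]
  refine dvd_sum fun A hA => ?_
  obtain ⟨x, -, rfl⟩ := mem_image.1 hA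
  rw [sum_subtype _ fun y => ?_]
  · exact hd _ (hpart x).1
  · simp only [mem_filter, mem_univ, true_and]
    exact ⟨fun h => h ▸ (hpart y).2, fun hy => (hunique y _ ⟨(hpart x).1, hy⟩).symm⟩

section Sign

variable {ℓ n : ℕ}

def vertexSign (x : Fin n → Fin ℓ) : ℤˣ := (-1) ^ ∑ i, (x i : ℕ)

theorem vertexSign_eq_neg_of_adj {x y : Fin n → Fin ℓ} (h : (pathPower ℓ n).Adj x y) :
    vertexSign y = -vertexSign x := by
  have hdist : ∑ i, (((x i : ℕ) : ℤ) - (y i : ℕ)).natAbs = 1 := h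
  have hodd : (∑ i, (x i : ℕ) + ∑ i, (y i : ℕ)) % 2 = 1 := by
    calc (∑ i, (x i : ℕ) + ∑ i, (y i : ℕ)) % 2 = (∑ i, ((x i : ℕ) + y i) % 2) % 2 := by
          rw [← sum_add_distrib, sum_nat_mod]
      _ = (∑ i, (((x i : ℕ) : ℤ) - (y i : ℕ)).natAbs % 2) % 2 := by
          congr 1; exact sum_congr rfl fun i _ => by omega
      _ = 1 := by rw [← sum_nat_mod, hdist]
  unfold vertexSign
  rw [← mul_neg_one (_ ^ _), ← pow_succ, Int.units_pow_eq_pow_mod_two,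
    Int.units_pow_eq_pow_mod_two _ (_ + 1)]
  congr 1
  omega

theorem sum_vertexSign (hℓ : Odd ℓ) : ∑ x : Fin n → Fin ℓ, (vertexSign x : ℤ) = 1 := by
  have hpath : ∑ t : Fin ℓ, (-1 : ℤ) ^ (t : ℕ) = 1 := by
    rw [Fin.sum_univ_eq_sum_range (fun t => (-1 : ℤ) ^ t), neg_one_geom_sum,
      if_neg (Nat.not_even_iff_odd.2 hℓ)]
  calc ∑ x : Fin n → Fin ℓ, (vertexSign x : ℤ)
        = ∑ x : Fin n → Fin ℓ, ∏ i, (-1 : ℤ) ^ (x i : ℕ) := by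
        refine sum_congr rfl fun x _ => ?_
        rw [vertexSign, Units.val_pow_eq_pow_val, Units.val_neg, Units.val_one,
          prod_pow_eq_pow_sum]
    _ = ∏ i : Fin n, ∑ t : Fin ℓ, (-1 : ℤ) ^ (t : ℕ) := by
        rw [Fintype.prod_sum]
    _ = 1 := by simp [hpath]

end Sign

section UnitStar

variable {ℓ m : ℕ} [NeZero ℓ]

theorem pathPower_adj_zero_iff {x : Fin m → Fin ℓ} :
    (pathPower ℓ m).Adj 0 x ↔ ∑ i, (x i : ℕ) = 1 := by
  change ∑ i, (((0 : Fin ℓ) : ℕ) - ((x i : ℕ) : ℤ)).natAbs = 1 ↔ _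
  simp

theorem sum_val_single (hℓ : 1 < ℓ) (i : Fin m) :
    ∑ j, ((Pi.single i 1 : Fin m → Fin ℓ) j : ℕ) = 1 := by
  simp [Pi.single_apply, apply_ite, Nat.mod_eq_of_lt hℓ]

def unitStar (ℓ m : ℕ) [NeZero ℓ] : Finset (Fin m → Fin ℓ) :=
  insert 0 (univ.image fun i => Pi.single i 1)

theorem single_one_ne_zero (hℓ : 1 < ℓ) (i : Fin m) : (Pi.single i 1 : Fin m → Fin ℓ) ≠ 0 := by
  intro h
  simpa [sum_val_single hℓ] using congrArg (fun x : Fin m → Fin ℓ => ∑ j, (x j : ℕ)) h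

theorem single_one_injective (hℓ : 1 < ℓ) :
    Function.Injective fun i : Fin m => (Pi.single i 1 : Fin m → Fin ℓ) := by
  intro i j h
  by_contra hij
  have : ℓ = 1 := by simpa [hij] using congrFun h i
  omega

theorem card_unitStar (hℓ : 1 < ℓ) : (unitStar ℓ m).card = m + 1 := by
  rw [unitStar, card_insert_of_notMem, card_image_of_injective _ (single_one_injective hℓ),
    card_univ, Fintype.card_fin]
  simpa [eq_comm] using single_one_ne_zero hℓ

theorem sum_vertexSign_unitStar (hℓ : 1 < ℓ) :
    ∑ x ∈ unitStar ℓ m, (vertexSign x : ℤ) = 1 - m := by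
  rw [unitStar, sum_insert, sum_image fun i _ j _ h => single_one_injective hℓ h]
  · simp [vertexSign, sum_val_single hℓ, sub_eq_add_neg]
  · simpa [eq_comm] using single_one_ne_zero hℓ

theorem connected_induce_unitStar (hℓ : 1 < ℓ) :
    ((pathPower ℓ m).induce (unitStar ℓ m : Set (Fin m → Fin ℓ))).Connected := by
  refine SimpleGraph.Connected.of_isUniversal (v := ⟨0, mem_insert_self _ _⟩) fun x hx => ?_
  obtain ⟨x, hx'⟩ := x
  simp only [unitStar, coe_insert, coe_image, coe_univ, Set.image_univ, Set.mem_insert_iff,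
    Set.mem_range] at hx'
  rcases hx' with rfl | ⟨i, rfl⟩
  · exact absurd rfl hx
  · exact pathPower_adj_zero_iff.2 (sum_val_single hℓ i)

end UnitStar

theorem not_exists_partition_into_copies {ℓ m : ℕ} (hℓ : Odd ℓ) {S : Set (Fin m → Fin ℓ)}
    [Fintype S] (hS : ((pathPower ℓ m).induce S).Connected)
    (hσ : (∑ s : S, (vertexSign (s : Fin m → Fin ℓ) : ℤ)).natAbs ≠ 1) (n : ℕ) :
    ¬ ∃ P : Set (Set (Fin n → Fin ℓ)),
      (∀ A ∈ P, Nonempty ((pathPower ℓ n).induce A ≃g (pathPower ℓ m).induce S)) ∧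
      (∀ x : Fin n → Fin ℓ, ∃! A, A ∈ P ∧ x ∈ A) := by
  classical
  rintro ⟨P, hcopy, hpart⟩
  have hdvd : (∑ s : S, (vertexSign (s : Fin m → Fin ℓ) : ℤ)) ∣ 1 := by
    rw [← sum_vertexSign (n := n) hℓ]
    refine dvd_sum_of_dvd_sum_parts hpart fun A hA => ?_
    obtain ⟨φ⟩ := hcopy A hA
    exact (φ.symm.associated_sum_of_adj_neg hS (fun _ _ h => vertexSign_eq_neg_of_adj h)
      fun _ _ h => vertexSign_eq_neg_of_adj h).dvd
  exact hσ (Int.isUnit_iff_natAbs_eq.1 (isUnit_of_dvd_one hdvd))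

theorem stmt_10 (ℓ : ℕ) (hodd : Odd ℓ) (hl : 3 ≤ ℓ) :
    ∃ m : ℕ, ∃ S : Set (Fin m → Fin ℓ), S.ncard = ℓ ^ 2 ∧
      ∀ n : ℕ, ¬ ∃ P : Set (Set (Fin n → Fin ℓ)),
        (∀ A ∈ P, Nonempty ((pathPower ℓ n).induce A ≃g (pathPower ℓ m).induce S)) ∧
        (∀ x : Fin n → Fin ℓ, ∃! A, A ∈ P ∧ x ∈ A) := by
  have : NeZero ℓ := ⟨by omega⟩
  have hℓ : 1 < ℓ := by omega
  have hsq : 9 ≤ ℓ ^ 2 := by nlinarith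
  refine ⟨ℓ ^ 2 - 1, unitStar ℓ (ℓ ^ 2 - 1), ?_,
    not_exists_partition_into_copies hodd (connected_induce_unitStar hℓ) ?_⟩
  · rw [Set.ncard_coe_finset, card_unitStar hℓ]
    omega
  · rw [sum_finset_coe (fun x => (vertexSign x : ℤ)), sum_vertexSign_unitStar hℓ,
      Nat.cast_sub (by omega)]
    omega
end

section
/- For every n, the edge set of the hypercube Q_n can be partitioned into antipodal paths, namely the paths (x_1, x_2, ..., x_n) → (1−x_1, x_2, ..., x_n) → (1−x_1, 1−x_2, ..., x_n) → ... → (1−x_1, ..., 1−x_n) taken over all x ∈ {0,1}^n with x_1 + ... + x_n even; consequently, whenever k divides n, E(Q_n) can be partitioned into paths with k edges. -/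
/-- The hypercube graph `Q_n`. -/
def hypercubeGraph (n : ℕ) : SimpleGraph (Fin n → ZMod 2) where
  Adj x y := hammingDist x y = 1
  symm := ⟨fun x y h => by rwa [hammingDist_comm]⟩
  loopless := ⟨fun x h => by simp only [hammingDist_self] at h; exact absurd h (by norm_num)⟩

/-- Flip the first `j` coordinates of `x`. -/
def flipPrefix (n : ℕ) (x : Fin n → ZMod 2) (j : ℕ) : Fin n → ZMod 2 :=
  fun i => if (i : ℕ) < j then x i + 1 else x i

/-!
Writing `p_j` for the indicator vector of the first `j` coordinates and `e_j` for the `j`-th unit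
vector, the `j`-th edge of the antipodal path from `x` is `{x + p_j, x + p_j + e_j}`. Conversely an
edge `{u, u + e_j}` is of this form exactly for `x = u + p_j` and `x = u + p_j + e_j`; these two
start points differ in one coordinate, so exactly one of them has even weight. Cutting every
antipodal path of even start point into `n / k` blocks of `k` consecutive edges then partitions the
edges into paths of length `k`.
-/

section CharTwo

variable {G : Type*} [AddCommGroup G] [Module (ZMod 2) G]

/-- In characteristic two `d` is the sum of the endpoints of `s(u, u + d)`, so it is determined by
the edge. -/
theorem Sym2.mk_add_eq_mk_add_iff {u y d d' : G} :
    s(u, u + d) = s(y, y + d') ↔ d' = d ∧ (y = u ∨ y = u + d) := by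
  rw [Sym2.eq_iff]
  constructor
  · rintro (⟨rfl, h⟩ | ⟨rfl, h⟩)
    · exact ⟨(add_left_cancel h).symm, .inl rfl⟩
    · have hd : d' = d := by
        rw [add_assoc, add_eq_left, ← ZModModule.sub_eq_add, sub_eq_zero] at h
        exact h
      exact ⟨hd, .inr h.symm⟩
  · rintro ⟨rfl, rfl | rfl⟩
    · exact .inl ⟨rfl, rfl⟩
    · exact .inr ⟨by rw [add_assoc, ZModModule.add_self, add_zero], rfl⟩

end CharTwo

section Hamming

variable {ι : Type*} [Fintype ι]

theorem hammingNorm_eq_one_iff_exists_eq_single [DecidableEq ι] {w : ι → ZMod 2} :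
    hammingNorm w = 1 ↔ ∃ j, w = Pi.single j 1 := by
  have hne : ∀ a : ZMod 2, a ≠ 0 ↔ a = 1 := by decide
  rw [hammingNorm, Finset.card_eq_one]
  refine exists_congr fun j => ⟨fun h => funext fun i => ?_, fun h => ?_⟩
  · have hi : w i ≠ 0 ↔ i = j := by simpa using Finset.ext_iff.1 h i
    rw [Pi.single_apply]
    split_ifs with hij
    · exact (hne _).1 (hi.2 hij)
    · exact not_not.1 (mt hi.1 hij)
  · ext i
    by_cases hij : i = j <;> simp [h, hij]

theorem even_sum_val_iff (x : ι → ZMod 2) : Even (∑ i, (x i).val) ↔ ∑ i, x i = 0 := by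
  rw [← ZMod.natCast_eq_zero_iff_even, Nat.cast_sum]
  simp only [ZMod.natCast_val, ZMod.cast_id', id]

theorem even_sum_val_add_single_iff [DecidableEq ι] (x : ι → ZMod 2) (j : ι) :
    Even (∑ i, ((x + Pi.single j 1 : ι → ZMod 2) i).val) ↔ ¬ Even (∑ i, (x i).val) := by
  have h : ∀ a : ZMod 2, a + 1 = 0 ↔ ¬ a = 0 := by decide
  simp only [even_sum_val_iff, Pi.add_apply, Finset.sum_add_distrib, Finset.sum_pi_single',
    Finset.mem_univ, if_true, h]

end Hamming

theorem hypercubeGraph_adj_iff {n : ℕ} {u v : Fin n → ZMod 2} :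
    (hypercubeGraph n).Adj u v ↔ ∃ j, v = u + Pi.single j 1 := by
  change hammingDist u v = 1 ↔ _
  simp only [hammingDist_eq_hammingNorm, hammingNorm_eq_one_iff_exists_eq_single,
    neg_add_eq_iff_eq_add]

section FlipPrefix

variable {n : ℕ}

theorem flipPrefix_add (x y : Fin n → ZMod 2) (j : ℕ) :
    flipPrefix n (x + y) j = flipPrefix n x j + y := by
  funext i
  simp only [flipPrefix, Pi.add_apply]
  split_ifs <;> abel

theorem flipPrefix_flipPrefix (x : Fin n → ZMod 2) (j : ℕ) :
    flipPrefix n (flipPrefix n x j) j = x := by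
  funext i
  simp only [flipPrefix]
  split_ifs <;> simp [add_assoc, ZModModule.add_self]

theorem flipPrefix_eq_iff {x y : Fin n → ZMod 2} {j : ℕ} :
    flipPrefix n x j = y ↔ x = flipPrefix n y j := by
  constructor <;> rintro rfl
  · exact (flipPrefix_flipPrefix x j).symm
  · exact flipPrefix_flipPrefix y j

theorem flipPrefix_succ (x : Fin n → ZMod 2) (j : Fin n) :
    flipPrefix n x (j + 1) = flipPrefix n x j + Pi.single j 1 := by
  funext i
  simp only [flipPrefix, Pi.add_apply, Pi.single_apply, Fin.ext_iff]
  split_ifs <;> first | omega | simp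

theorem flipPrefix_ne_of_lt (x : Fin n → ZMod 2) {a b : ℕ} (hab : a < b) (ha : a < n) :
    flipPrefix n x a ≠ flipPrefix n x b := by
  intro h
  simpa [flipPrefix, hab] using congrFun h ⟨a, ha⟩

theorem flipPrefix_injOn (x : Fin n → ZMod 2) : Set.InjOn (flipPrefix n x) (Set.Iic n) := by
  intro a ha b hb h
  by_contra hne
  rcases Nat.lt_or_gt_of_ne hne with hab | hba
  · exact flipPrefix_ne_of_lt x hab (hab.trans_le hb) h
  · exact flipPrefix_ne_of_lt x hba (hba.trans_le ha) h.symm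

theorem hypercubeGraph_adj_flipPrefix_succ (x : Fin n → ZMod 2) (j : Fin n) :
    (hypercubeGraph n).Adj (flipPrefix n x j) (flipPrefix n x (j + 1)) :=
  hypercubeGraph_adj_iff.2 ⟨j, flipPrefix_succ x j⟩

end FlipPrefix

theorem Nat.div_eq_iff_exists_mul_add {j k m : ℕ} (hk : 0 < k) :
    j / k = m ↔ ∃ i < k, m * k + i = j := by
  rw [Nat.div_eq_iff hk]
  constructor
  · exact fun h => ⟨j - m * k, by omega, by omega⟩
  · rintro ⟨i, hi, rfl⟩
    omega

section Partition

variable {n : ℕ}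

theorem mk_add_single_eq_flipPrefix_iff {u x : Fin n → ZMod 2} {j m : Fin n} :
    s(u, u + Pi.single j 1) = s(flipPrefix n x m, flipPrefix n x (m + 1)) ↔
      m = j ∧ (x = flipPrefix n u j ∨ x = flipPrefix n u j + Pi.single j 1) := by
  have hsingle : (Pi.single m 1 : Fin n → ZMod 2) = Pi.single j 1 ↔ m = j :=
    ⟨fun h => by simpa [Pi.single_apply] using congrFun h m, by rintro rfl; rfl⟩
  rw [flipPrefix_succ, Sym2.mk_add_eq_mk_add_iff, hsingle]
  refine and_congr_right fun hmj => ?_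
  subst hmj
  rw [flipPrefix_eq_iff, flipPrefix_eq_iff, flipPrefix_add]

theorem existsUnique_even_flipPrefix_of_mem_edgeSet {e : Sym2 (Fin n → ZMod 2)}
    (he : e ∈ (hypercubeGraph n).edgeSet) :
    ∃! p : (Fin n → ZMod 2) × Fin n,
      Even (∑ i, (p.1 i).val) ∧
      e = s(flipPrefix n p.1 (p.2 : ℕ), flipPrefix n p.1 ((p.2 : ℕ) + 1)) := by
  induction e using Sym2.ind with | _ u v => ?_
  obtain ⟨j, rfl⟩ := hypercubeGraph_adj_iff.1 (SimpleGraph.mem_edgeSet _ |>.1 he)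
  set x₀ := flipPrefix n u j
  have hpar := even_sum_val_add_single_iff x₀ j
  by_cases h₀ : Even (∑ i, (x₀ i).val)
  · refine ⟨(x₀, j), ⟨h₀, mk_add_single_eq_flipPrefix_iff.2 ⟨rfl, .inl rfl⟩⟩, ?_⟩
    rintro ⟨x, m⟩ ⟨hx, he⟩
    dsimp only at hx he
    obtain ⟨rfl, rfl | rfl⟩ := mk_add_single_eq_flipPrefix_iff.1 he
    · rfl
    · exact absurd h₀ (hpar.1 hx)
  · refine ⟨(x₀ + Pi.single j 1, j),
      ⟨hpar.2 h₀, mk_add_single_eq_flipPrefix_iff.2 ⟨rfl, .inr rfl⟩⟩, ?_⟩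
    rintro ⟨x, m⟩ ⟨hx, he⟩
    dsimp only at hx he
    obtain ⟨rfl, rfl | rfl⟩ := mk_add_single_eq_flipPrefix_iff.1 he
    · exact absurd hx h₀
    · rfl

def flipPrefixWalk (x : Fin n → ZMod 2) (a : ℕ) : (k : ℕ) → a + k ≤ n →
    (hypercubeGraph n).Walk (flipPrefix n x a) (flipPrefix n x (a + k))
  | 0, _ => .nil
  | k + 1, h => (flipPrefixWalk x a k (by omega)).concat
      (hypercubeGraph_adj_flipPrefix_succ x ⟨a + k, by omega⟩)

theorem length_flipPrefixWalk (x : Fin n → ZMod 2) (a k : ℕ) (h : a + k ≤ n) :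
    (flipPrefixWalk x a k h).length = k := by
  induction k with
  | zero => rfl
  | succ k ih => rw [flipPrefixWalk, SimpleGraph.Walk.length_concat, ih]

theorem support_flipPrefixWalk (x : Fin n → ZMod 2) (a k : ℕ) (h : a + k ≤ n) :
    (flipPrefixWalk x a k h).support = (List.range (k + 1)).map (flipPrefix n x <| a + ·) := by
  induction k with
  | zero => rfl
  | succ k ih =>
    rw [flipPrefixWalk, SimpleGraph.Walk.support_concat, ih, List.range_succ (n := k + 1),
      List.map_append]
    rfl

theorem mem_edges_flipPrefixWalk {x : Fin n → ZMod 2} {a k : ℕ} {h : a + k ≤ n}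
    {e : Sym2 (Fin n → ZMod 2)} :
    e ∈ (flipPrefixWalk x a k h).edges ↔
      ∃ i < k, e = s(flipPrefix n x (a + i), flipPrefix n x (a + i + 1)) := by
  induction k with
  | zero => simp [flipPrefixWalk]
  | succ k ih =>
    rw [flipPrefixWalk, SimpleGraph.Walk.edges_concat, List.concat_eq_append, List.mem_append,
      List.mem_singleton, ih, Nat.exists_lt_succ_right]
    rfl

theorem isPath_flipPrefixWalk (x : Fin n → ZMod 2) (a k : ℕ) (h : a + k ≤ n) :
    (flipPrefixWalk x a k h).IsPath := by
  rw [SimpleGraph.Walk.isPath_def, support_flipPrefixWalk]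
  refine List.Nodup.map_on (fun i hi j hj hij => ?_) List.nodup_range
  rw [List.mem_range] at hi hj
  have := flipPrefix_injOn x (Set.mem_Iic.2 (by omega)) (Set.mem_Iic.2 (by omega)) hij
  omega

theorem flipPrefix_edge_mem_edges_flipPrefixWalk_iff {x x' : Fin n → ZMod 2}
    (hx : Even (∑ i, (x i).val)) (hx' : Even (∑ i, (x' i).val)) (j : Fin n) {a k : ℕ}
    {h : a + k ≤ n} :
    s(flipPrefix n x j, flipPrefix n x (j + 1)) ∈ (flipPrefixWalk x' a k h).edges ↔
      x' = x ∧ ∃ i < k, a + i = j := by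
  rw [mem_edges_flipPrefixWalk]
  constructor
  · rintro ⟨i, hi, he⟩
    have hpair := (existsUnique_even_flipPrefix_of_mem_edgeSet
      (hypercubeGraph_adj_flipPrefix_succ x j)).unique
        (y₁ := (x', ⟨a + i, by omega⟩)) (y₂ := (x, j)) ⟨hx', he⟩ ⟨hx, rfl⟩
    simp only [Prod.ext_iff, Fin.ext_iff] at hpair
    exact ⟨hpair.1, i, hi, hpair.2⟩
  · rintro ⟨rfl, i, hi, hij⟩
    exact ⟨i, hi, by rw [hij]⟩

theorem exists_paths_partition_edgeSet {k : ℕ} (hk : 0 < k) (hkn : k ∣ n) :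
    ∃ P : Set ((u : Fin n → ZMod 2) × (v : Fin n → ZMod 2) × (hypercubeGraph n).Walk u v),
      (∀ p ∈ P, p.2.2.IsPath ∧ p.2.2.length = k) ∧
      ∀ e ∈ (hypercubeGraph n).edgeSet, ∃! p, p ∈ P ∧ e ∈ p.2.2.edges := by
  have hblock (m : Fin (n / k)) : m * k + k ≤ n := by
    simpa [add_one_mul] using (Nat.le_div_iff_mul_le hk).1 m.isLt
  refine ⟨{p | ∃ x : Fin n → ZMod 2, Even (∑ i, (x i).val) ∧ ∃ m : Fin (n / k),
      p = ⟨_, _, flipPrefixWalk x (m * k) k (hblock m)⟩}, ?_, ?_⟩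
  · rintro _ ⟨x, -, m, rfl⟩
    exact ⟨isPath_flipPrefixWalk .., length_flipPrefixWalk ..⟩
  intro e he
  obtain ⟨⟨x, j⟩, ⟨hx, rfl⟩, -⟩ := existsUnique_even_flipPrefix_of_mem_edgeSet he
  have hmem (x' : Fin n → ZMod 2) (hx' : Even (∑ i, (x' i).val)) (m : Fin (n / k)) :
      s(flipPrefix n x j, flipPrefix n x (j + 1)) ∈
        (flipPrefixWalk x' (m * k) k (hblock m)).edges ↔ x' = x ∧ j / k = m := by
    rw [flipPrefix_edge_mem_edges_flipPrefixWalk_iff hx hx', Nat.div_eq_iff_exists_mul_add hk]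
  let m₀ : Fin (n / k) := ⟨j / k, Nat.div_lt_div_of_lt_of_dvd hkn j.isLt⟩
  refine ⟨⟨_, _, flipPrefixWalk x (m₀ * k) k (hblock m₀)⟩,
    ⟨⟨x, hx, m₀, rfl⟩, (hmem x hx m₀).2 ⟨rfl, rfl⟩⟩, ?_⟩
  rintro _ ⟨⟨x', hx', m, rfl⟩, he⟩
  obtain ⟨rfl, hm⟩ := (hmem x' hx' m).1 he
  obtain rfl : m = m₀ := Fin.ext hm.symm
  rfl

end Partition

theorem stmt_12 (n : ℕ) :
    (∀ e ∈ (hypercubeGraph n).edgeSet,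
      ∃! p : (Fin n → ZMod 2) × Fin n,
        Even (∑ i, (p.1 i).val) ∧
        e = s(flipPrefix n p.1 (p.2 : ℕ), flipPrefix n p.1 ((p.2 : ℕ) + 1))) ∧
    (∀ k : ℕ, 0 < k → k ∣ n →
      ∃ P : Set ((u : Fin n → ZMod 2) × (v : Fin n → ZMod 2) ×
          (hypercubeGraph n).Walk u v),
        (∀ p ∈ P, p.2.2.IsPath ∧ p.2.2.length = k) ∧
        ∀ e ∈ (hypercubeGraph n).edgeSet, ∃! p, p ∈ P ∧ e ∈ p.2.2.edges) :=
  ⟨fun _ => existsUnique_even_flipPrefix_of_mem_edgeSet,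
    fun _ hk hkn => exists_paths_partition_edgeSet hk hkn⟩
end
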